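/- arXiv:1412.4056 — 2 statements merged into one kernel-verified Lean document; each statement's English description precedes it below -/
import Mathlib

section
/- The first-order stable spline kernel matrix K_β ∈ ℝ^{n×n} with entries (K_β)_{i,j} = β^{max(i,j)} is positive semidefinite for all β ∈ [0,1). -/
open Matrix

/-- The first-order stable spline (TC) kernel matrix, `(K_β)_{i,j} = β^{max(i,j)}`
with indices running from `1` to `n`. -/
noncomputable def stableSpline (n : ℕ) (β : ℝ) : Matrix (Fin n) (Fin n) ℝ :=
  Matrix.of fun i j => β ^ (max ((i : ℕ) + 1) ((j : ℕ) + 1))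

/-- The first-order stable spline kernel matrix is positive semidefinite for all
`β ∈ [0,1)`. -/
theorem stableSpline_posSemidef (n : ℕ) (β : ℝ) (hβ0 : 0 ≤ β) (hβ1 : β < 1) :
    (stableSpline n β).PosSemidef := by
  classical
  set d : ℕ → ℝ := fun k => if k = n then β ^ (n + 1) else β ^ (k + 1) - β ^ (k + 2) with hd
  have hdnn : ∀ k, 0 ≤ d k := by
    intro k
    simp only [hd]
    split
    · positivity
    · have h1 : β ^ (k + 2) = β ^ (k + 1) * β := by ring
      have h2 : β ^ (k + 1) * β ≤ β ^ (k + 1) * 1 := by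
        apply mul_le_mul_of_nonneg_left (le_of_lt hβ1) (by positivity)
      simp at h2
      linarith [h2, h1.symm ▸ h2]
  set A : Matrix (Fin (n + 1)) (Fin n) ℝ :=
    Matrix.of (fun k i => if (i : ℕ) ≤ (k : ℕ) then Real.sqrt (d k) else 0) with hA
  have key : stableSpline n β = Aᴴ * A := by
    ext i j
    have him : (i : ℕ) < n := i.isLt
    have hjm : (j : ℕ) < n := j.isLt
    set m : ℕ := max (i : ℕ) (j : ℕ) with hm
    have hmn : m ≤ n := by omega
    have hterm : ∀ k : Fin (n + 1),
        Aᴴ i k * A k j = if m ≤ (k : ℕ) then d k else 0 := by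
      intro k
      simp only [hA, conjTranspose_apply, Matrix.of_apply, RCLike.star_def, conj_trivial]
      by_cases h1 : (i : ℕ) ≤ (k : ℕ) <;> by_cases h2 : (j : ℕ) ≤ (k : ℕ) <;>
        simp [h1, h2, hm, Real.mul_self_sqrt (hdnn k)]
    have hsum : (Aᴴ * A) i j = ∑ k ∈ Finset.range (n + 1), if m ≤ k then d k else 0 := by
      rw [Matrix.mul_apply]
      rw [Finset.sum_congr rfl (fun k _ => hterm k)]
      exact Fin.sum_univ_eq_sum_range (fun k => if m ≤ k then d k else 0) (n + 1)
    rw [hsum]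
    have hfilter : ∑ k ∈ Finset.range (n + 1), (if m ≤ k then d k else 0)
        = ∑ k ∈ Finset.Ico m (n + 1), d k := by
      rw [← Finset.sum_filter]
      congr 1
      ext k
      simp [Finset.mem_filter, Finset.mem_range, Finset.mem_Ico]
      omega
    rw [hfilter, Finset.sum_Ico_succ_top hmn]
    have hmid : ∑ k ∈ Finset.Ico m n, d k = β ^ (m + 1) - β ^ (n + 1) := by
      have : ∀ k ∈ Finset.Ico m n, d k = β ^ (k + 1) - β ^ (k + 2) := by
        intro k hk
        simp only [Finset.mem_Ico] at hk
        simp [hd, Nat.ne_of_lt hk.2]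
      rw [Finset.sum_congr rfl this]
      rw [Finset.sum_Ico_eq_sub _ hmn]
      have tele : ∀ N : ℕ, ∑ k ∈ Finset.range N, (β ^ (k + 1) - β ^ (k + 2)) = β ^ 1 - β ^ (N + 1) := by
        intro N
        have := Finset.sum_range_sub' (fun k => β ^ (k + 1)) N
        simpa using this
      rw [tele, tele]
      ring
    have hdn : d n = β ^ (n + 1) := by simp [hd]
    rw [hmid, hdn]
    have : max ((i : ℕ) + 1) ((j : ℕ) + 1) = m + 1 := by omega
    simp [stableSpline, this]
    rfl
  rw [key]
  exact Matrix.posSemidef_conjTranspose_mul_self A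
end

section
/- The first-order stable spline kernel matrix K_β with entries β^{max(i,j)} is positive definite (hence invertible) for all β ∈ (0,1). -/
open Matrix Finset

private lemma ss_entry (n : ℕ) (β : ℝ) (i j : Fin n) :
    stableSpline n β i j = β^(n+1) + ∑ k ∈ Finset.range n,
      ((β^(k+1) - β^(k+2)) * (if i.val ≤ k then (1:ℝ) else 0)
        * (if (j : ℕ) ≤ k then (1:ℝ) else 0)) := by
  have hm : max (i : ℕ) (j : ℕ) < n := max_lt i.isLt j.isLt
  have h1 : ∀ k, (β^(k+1) - β^(k+2)) * (if i.val ≤ k then (1:ℝ) else 0)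
        * (if (j : ℕ) ≤ k then (1:ℝ) else 0)
      = if max (i : ℕ) (j : ℕ) ≤ k then β^(k+1) - β^(k+2) else 0 := by
    intro k
    by_cases hi : (i : ℕ) ≤ k <;> by_cases hj : (j : ℕ) ≤ k <;>
      simp [hi, hj, max_le_iff]
  simp only [h1, ← Finset.sum_filter]
  have h2 : (Finset.range n).filter (fun k => max (i : ℕ) (j : ℕ) ≤ k)
      = Finset.Ico (max (i : ℕ) (j : ℕ)) n := by
    ext k; simp [Finset.mem_Ico, and_comm]
  rw [h2, Finset.sum_Ico_eq_sub _ hm.le]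
  have h3 : ∀ N, ∑ k ∈ Finset.range N, (β^(k+1) - β^(k+2)) = β^1 - β^(N+1) := by
    intro N; simpa using Finset.sum_range_sub' (fun k => β^(k+1)) N
  rw [h3, h3]
  have : max ((i:ℕ)+1) ((j:ℕ)+1) = max (i:ℕ) (j:ℕ) + 1 := (Nat.succ_max_succ _ _).symm ▸ rfl
  simp only [stableSpline, Matrix.of_apply, this]
  ring

private lemma ss_quadform (n : ℕ) (β : ℝ) (x : Fin n → ℝ) :
    x ⬝ᵥ (stableSpline n β *ᵥ x)
      = β^(n+1) * (∑ i, x i)^2 + ∑ k ∈ Finset.range n,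
          (β^(k+1) - β^(k+2)) * (∑ i, (if i.val ≤ k then (1:ℝ) else 0) * x i)^2 := by
  simp only [dotProduct, mulVec, ss_entry]
  simp only [add_mul, mul_add, Finset.sum_add_distrib, Finset.sum_mul, Finset.mul_sum]
  congr 1
  · rw [sq, Finset.sum_mul_sum, Finset.mul_sum]
    apply Finset.sum_congr rfl; intro i _
    rw [Finset.mul_sum]
    apply Finset.sum_congr rfl; intro j _
    ring
  · have swap : ∀ (g : Fin n → Fin n → ℕ → ℝ),
        (∑ y, ∑ z, ∑ k ∈ Finset.range n, g y z k)
          = ∑ k ∈ Finset.range n, ∑ y, ∑ z, g y z k := by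
      intro g
      calc (∑ y, ∑ z, ∑ k ∈ Finset.range n, g y z k)
          = ∑ y, ∑ k ∈ Finset.range n, ∑ z, g y z k :=
            Finset.sum_congr rfl fun _ _ => Finset.sum_comm
        _ = ∑ k ∈ Finset.range n, ∑ y, ∑ z, g y z k := Finset.sum_comm
    rw [swap]
    apply Finset.sum_congr rfl; intro k _
    rw [sq, Finset.sum_mul_sum, Finset.mul_sum]
    apply Finset.sum_congr rfl; intro i _
    rw [Finset.mul_sum]
    apply Finset.sum_congr rfl; intro j _
    ring

/-- The first-order stable spline kernel matrix is positive definite, hence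
invertible, for all `β ∈ (0,1)`. -/
theorem stableSpline_posDef (n : ℕ) (β : ℝ) (hβ0 : 0 < β) (hβ1 : β < 1) :
    (stableSpline n β).PosDef ∧ IsUnit (stableSpline n β).det := by
  have hd : ∀ k : ℕ, 0 < β^(k+1) - β^(k+2) := by
    intro k
    have : β^(k+2) < β^(k+1) := pow_lt_pow_right_of_lt_one₀ hβ0 hβ1 (by omega)
    linarith
  have hPD : (stableSpline n β).PosDef := by
    rw [Matrix.posDef_iff_dotProduct_mulVec]
    constructor
    · ext i j
      simp [stableSpline, Matrix.conjTranspose_apply, max_comm]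
    · intro x hx
      have hx' : ∃ i, x i ≠ 0 := Function.ne_iff.mp hx
      -- minimal index with x i ≠ 0
      let s := Finset.univ.filter (fun i => x i ≠ 0)
      have hs : s.Nonempty := by
        obtain ⟨i, hi⟩ := hx'
        exact ⟨i, by simp [s, hi]⟩
      set i₀ := s.min' hs with hi₀def
      have hi₀ : x i₀ ≠ 0 := by
        have := s.min'_mem hs
        simpa [s] using this
      have hmin : ∀ j : Fin n, j < i₀ → x j = 0 := by
        intro j hj
        by_contra hje
        exact absurd (s.min'_le j (by simp [s, hje])) (not_le.mpr hj)
      have hSk : (∑ i, (if i.val ≤ i₀.val then (1:ℝ) else 0) * x i) = x i₀ := by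
        rw [Finset.sum_eq_single i₀]
        · simp
        · intro b _ hb
          by_cases hble : (b : ℕ) ≤ (i₀ : ℕ)
          · have : b < i₀ := lt_of_le_of_ne (by exact_mod_cast hble) hb
            simp [hmin b this]
          · simp [hble]
        · simp
      simp only [star_trivial]
      rw [ss_quadform]
      have h1 : 0 ≤ β^(n+1) * (∑ i, x i)^2 :=
        mul_nonneg (pow_nonneg hβ0.le _) (sq_nonneg _)
      have h2 : 0 < ∑ k ∈ Finset.range n,
          (β^(k+1) - β^(k+2)) * (∑ i, (if i.val ≤ k then (1:ℝ) else 0) * x i)^2 := by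
        apply Finset.sum_pos'
        · intro k _
          exact mul_nonneg (hd k).le (sq_nonneg _)
        · refine ⟨(i₀ : ℕ), Finset.mem_range.mpr i₀.isLt, ?_⟩
          rw [hSk]
          exact mul_pos (hd _) (by positivity)
      linarith
  exact ⟨hPD, isUnit_iff_ne_zero.mpr hPD.det_pos.ne'⟩
end
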